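/- arXiv:1405.1620 — 7 statements merged into one kernel-verified Lean document; each statement's English description precedes it below -/
import Mathlib

section
/- If G is a group, H ≤ G a subgroup, Z ≤ Y ≤ G subgroups with Y abelian, and the quotient Y/Z is divisible (every element has an n-th root for all n ≥ 1), and Y ∩ H has finite index in Y, then Y = (Y ∩ H)Z and the index [Y : Y ∩ H] equals [Z : Z ∩ H]. -/
/-!
Write `n = [Y : Y ∩ H]`. Every `x ∈ Y` satisfies `x ^ n! ∈ H`, since some power `x ^ m` with
`0 < m ≤ n` lies in `H`. Divisibility of `Y/Z` writes each `y ∈ Y` as `x ^ n! * z` with `z ∈ Z`,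
so `Y = (Y ∩ H) Z`. As `Y` is abelian, `Y ∩ H` is normal in `Y`, and the second isomorphism
theorem gives `Y / (Y ∩ H) ≅ Z / (Z ∩ H)`.
-/

namespace Subgroup

variable {G : Type*} [Group G] {H K Y Z : Subgroup G}

theorem sup_eq_of_forall_eq_pow_mul {n : ℕ} (hKY : K ≤ Y) (hZY : Z ≤ Y)
    (hpow : ∀ x ∈ Y, x ^ n ∈ K) (hroot : ∀ y ∈ Y, ∃ x ∈ Y, ∃ z ∈ Z, y = x ^ n * z) :
    K ⊔ Z = Y := by
  refine le_antisymm (sup_le hKY hZY) fun y hy => ?_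
  obtain ⟨x, hx, z, hz, rfl⟩ := hroot y hy
  exact mul_mem (mem_sup_left (hpow x hx)) (mem_sup_right hz)

theorem pow_factorial_relIndex_mem (hfin : H.relIndex Y ≠ 0) {x : G} (hx : x ∈ Y) :
    x ^ (H.relIndex Y).factorial ∈ Y ⊓ H :=
  inf_comm H Y ▸ pow_mem_of_relIndex_ne_zero_of_dvd hfin hx fun _ hm hle => Nat.dvd_factorial hm hle

theorem relIndex_eq_of_inf_sup_eq [(H.subgroupOf Y).Normal] (hZY : Z ≤ Y) (hsup : Y ⊓ H ⊔ Z = Y) :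
    H.relIndex Y = H.relIndex Z := by
  have htop : H.subgroupOf Y ⊔ Z.subgroupOf Y = ⊤ := by
    rw [← inf_subgroupOf_left, ← subgroupOf_sup inf_le_left hZY, hsup, subgroupOf_self]
  calc H.relIndex Y = (H.subgroupOf Y).relIndex ⊤ := (relIndex_top_right _).symm
    _ = (H.subgroupOf Y).relIndex (Z.subgroupOf Y) := by rw [← htop, relIndex_sup_left]
    _ = H.relIndex Z := relIndex_subgroupOf hZY

end Subgroup

theorem divisible_quotient_finite_index
    (G : Type*) [Group G] (H Y Z : Subgroup G)
    (hZY : Z ≤ Y)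
    (hab : ∀ x ∈ Y, ∀ y ∈ Y, x * y = y * x)
    (hdiv : ∀ y ∈ Y, ∀ n : ℕ, 1 ≤ n → ∃ x ∈ Y, ∃ z ∈ Z, y = x ^ n * z)
    (hfin : H.relIndex Y ≠ 0) :
    (Y ⊓ H) ⊔ Z = Y ∧ H.relIndex Y = H.relIndex Z := by
  have hsup : Y ⊓ H ⊔ Z = Y :=
    Subgroup.sup_eq_of_forall_eq_pow_mul inf_le_left hZY
      (fun _ => Subgroup.pow_factorial_relIndex_mem hfin)
      fun y hy => hdiv y hy _ (Nat.factorial_pos _)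
  have : IsMulCommutative Y := .of_setLike_mul_comm hab
  exact ⟨hsup, Subgroup.relIndex_eq_of_inf_sup_eq hZY hsup⟩
end

section
/- Every finite-index subgroup of the additive group Z[1/p] has the form a·Z[1/p] for some positive integer a coprime to p, and its index equals a. -/
/-!
The index `n` of `H` in `ℤ[1/p]` annihilates the quotient, so `n • ℤ[1/p] ≤ H`; as `p` is invertible
in `ℤ[1/p]`, the `p`-part of `n` can be dropped, leaving `c` coprime to `p` with `c • ℤ[1/p] ≤ H`.
Bézout for `p ^ k` and `c` gives `ℤ[1/p] = ℤ + c • ℤ[1/p]`, so `ℤ` surjects onto `ℤ[1/p] ⧸ H` with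
kernel `H ∩ ℤ = b ℤ`. Hence the index is `b`, and since `c ∈ b ℤ`, `H = b • ℤ[1/p]`.
-/

/-- The additive subgroup `ℤ[1/p]` of `ℚ`: rationals with denominator a power of `p`. -/
def Zp (p : ℕ) : AddSubgroup ℚ :=
  AddSubgroup.closure {x : ℚ | ∃ k : ℕ, x = 1 / (p : ℚ) ^ k}

theorem Int.exists_addSubgroup_eq_zmultiples_natCast (K : AddSubgroup ℤ) :
    ∃ b : ℕ, K = AddSubgroup.zmultiples (b : ℤ) := by
  obtain ⟨g, rfl⟩ := Int.subgroup_cyclic K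
  exact ⟨g.natAbs, by rw [Int.zmultiples_natAbs, AddSubgroup.zmultiples_eq_closure]⟩

namespace Zp

variable {p : ℕ}

theorem one_div_pow_mem (p k : ℕ) : 1 / (p : ℚ) ^ k ∈ Zp p :=
  AddSubgroup.subset_closure ⟨k, rfl⟩

theorem intCast_mem (p : ℕ) (m : ℤ) : (m : ℚ) ∈ Zp p := by
  simpa using (Zp p).zsmul_mem (one_div_pow_mem p 0) m

theorem intCast_mul_mem (m : ℤ) {y : ℚ} (hy : y ∈ Zp p) : (m : ℚ) * y ∈ Zp p := by
  simpa using (Zp p).zsmul_mem hy m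

theorem natCast_mul_mem (m : ℕ) {y : ℚ} (hy : y ∈ Zp p) : (m : ℚ) * y ∈ Zp p := by
  exact_mod_cast intCast_mul_mem m hy

theorem div_pow_mem {x : ℚ} (hx : x ∈ Zp p) (k : ℕ) : x / (p : ℚ) ^ k ∈ Zp p := by
  induction hx using AddSubgroup.closure_induction with
  | mem x hx =>
    obtain ⟨j, rfl⟩ := hx
    rw [div_div, ← pow_add]
    exact one_div_pow_mem p (j + k)
  | zero => simp
  | add x y _ _ hx hy => simpa [add_div] using (Zp p).add_mem hx hy
  | neg x _ hx => simpa [neg_div] using (Zp p).neg_mem hx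

theorem exists_intCast_add_mul {c : ℕ} (hp : p ≠ 0) (hc : c.Coprime p) {x : ℚ} (hx : x ∈ Zp p) :
    ∃ m : ℤ, ∃ y ∈ Zp p, x = m + c * y := by
  induction hx using AddSubgroup.closure_induction with
  | mem x hx =>
    obtain ⟨k, rfl⟩ := hx
    obtain ⟨u, v, huv⟩ : IsCoprime ((p : ℤ) ^ k) c :=
      (Nat.isCoprime_iff_coprime.mpr hc.symm).pow_left
    refine ⟨u, v * (1 / (p : ℚ) ^ k), intCast_mul_mem v (one_div_pow_mem p k), ?_⟩
    have hpk : (p : ℚ) ^ k ≠ 0 := pow_ne_zero k (Nat.cast_ne_zero.mpr hp)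
    have huv' : (u : ℚ) * (p : ℚ) ^ k + (v : ℚ) * c = 1 := by exact_mod_cast huv
    field_simp
    linear_combination -huv'
  | zero => exact ⟨0, 0, (Zp p).zero_mem, by simp⟩
  | add x y _ _ hx hy =>
    obtain ⟨m, y₁, hy₁, rfl⟩ := hx
    obtain ⟨n, y₂, hy₂, rfl⟩ := hy
    exact ⟨m + n, y₁ + y₂, (Zp p).add_mem hy₁ hy₂, by push_cast; ring⟩
  | neg x _ hx =>
    obtain ⟨m, y, hy, rfl⟩ := hx
    exact ⟨-m, -y, (Zp p).neg_mem hy, by push_cast; ring⟩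

end Zp

namespace AddSubgroup

variable {p c : ℕ} {H : AddSubgroup ℚ}

theorem natCast_mul_mem_of_pow_mul (hp : p ≠ 0) {k : ℕ}
    (hH : ∀ y ∈ Zp p, ((p ^ k * c : ℕ) : ℚ) * y ∈ H) {y : ℚ} (hy : y ∈ Zp p) :
    (c : ℚ) * y ∈ H := by
  have hpk : (p : ℚ) ^ k ≠ 0 := pow_ne_zero k (Nat.cast_ne_zero.mpr hp)
  convert hH _ (Zp.div_pow_mem hy k) using 1
  push_cast
  field_simp

theorem intCast_range_sup_eq_Zp (hp : p ≠ 0) (hc : c.Coprime p) (hH : H ≤ Zp p)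
    (hcH : ∀ y ∈ Zp p, (c : ℚ) * y ∈ H) : (Int.castAddHom ℚ).range ⊔ H = Zp p := by
  refine le_antisymm (sup_le ?_ hH) fun x hx ↦ ?_
  · rintro _ ⟨m, rfl⟩
    exact Zp.intCast_mem p m
  · obtain ⟨m, y, hy, rfl⟩ := Zp.exists_intCast_add_mul hp hc hx
    exact add_mem_sup ⟨m, rfl⟩ (hcH y hy)

theorem relIndex_Zp_eq_index_comap (hp : p ≠ 0) (hc : c.Coprime p) (hH : H ≤ Zp p)
    (hcH : ∀ y ∈ Zp p, (c : ℚ) * y ∈ H) :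
    H.relIndex (Zp p) = (H.comap (Int.castAddHom ℚ)).index := by
  rw [← H.intCast_range_sup_eq_Zp hp hc hH hcH, sup_comm, relIndex_sup_left, index_comap]

theorem mem_iff_eq_mul_of_comap_eq (hp : p ≠ 0) (hc : c.Coprime p) (hH : H ≤ Zp p)
    (hcH : ∀ y ∈ Zp p, (c : ℚ) * y ∈ H) {b : ℕ}
    (hb : H.comap (Int.castAddHom ℚ) = zmultiples (b : ℤ)) {x : ℚ} :
    x ∈ H ↔ ∃ y ∈ Zp p, x = b * y := by
  have hint (m : ℤ) : (m : ℚ) ∈ H ↔ (b : ℤ) ∣ m := by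
    rw [← Int.mem_zmultiples_iff, ← hb]
    rfl
  constructor
  · intro hx
    obtain ⟨m, y, hy, rfl⟩ := Zp.exists_intCast_add_mul hp hc (hH hx)
    obtain ⟨m', rfl⟩ := (hint m).mp (by simpa using H.sub_mem hx (hcH y hy))
    obtain ⟨c', hc'⟩ : (b : ℤ) ∣ c := (hint c).mp (by simpa using hcH 1 (Zp.intCast_mem p 1))
    have hc'' : (c : ℚ) = b * c' := by exact_mod_cast hc'
    refine ⟨m' + c' * y, (Zp p).add_mem (Zp.intCast_mem p m') (Zp.intCast_mul_mem c' hy), ?_⟩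
    rw [hc'']
    push_cast
    ring
  · rintro ⟨y, hy, rfl⟩
    obtain ⟨m, z, hz, rfl⟩ := Zp.exists_intCast_add_mul hp hc hy
    rw [mul_add, mul_left_comm]
    exact H.add_mem (by exact_mod_cast (hint _).mpr (dvd_mul_right _ m))
      (hcH _ (Zp.natCast_mul_mem b hz))

end AddSubgroup

theorem finite_index_subgroups_of_Zp (p : ℕ) (hp : p.Prime)
    (H : AddSubgroup ℚ) (hH : H ≤ Zp p) (hfin : H.relIndex (Zp p) ≠ 0) :
    ∃ a : ℕ, 0 < a ∧ Nat.Coprime a p ∧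
      (∀ x : ℚ, x ∈ H ↔ ∃ y ∈ Zp p, x = (a : ℚ) * y) ∧
      H.relIndex (Zp p) = a := by
  obtain ⟨k, c, hcp, hkc⟩ := Nat.exists_eq_pow_mul_and_not_dvd hfin p hp.ne_one
  have hc : c.Coprime p := (hp.coprime_iff_not_dvd.mpr hcp).symm
  have hnH : ∀ y ∈ Zp p, ((p ^ k * c : ℕ) : ℚ) * y ∈ H := fun y hy ↦ by
    simpa [hkc, nsmul_eq_mul] using H.nsmul_relIndex_mem hy
  have hcH : ∀ y ∈ Zp p, (c : ℚ) * y ∈ H := fun y hy ↦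
    H.natCast_mul_mem_of_pow_mul hp.ne_zero hnH hy
  obtain ⟨b, hb⟩ := Int.exists_addSubgroup_eq_zmultiples_natCast (H.comap (Int.castAddHom ℚ))
  have hbc : b ∣ c := by
    have hcH' : (c : ℤ) ∈ H.comap (Int.castAddHom ℚ) := by simpa using hcH 1 (Zp.intCast_mem p 1)
    rw [hb, Int.mem_zmultiples_iff] at hcH'
    exact_mod_cast hcH'
  have hind : H.relIndex (Zp p) = b := by
    rw [H.relIndex_Zp_eq_index_comap hp.ne_zero hc hH hcH, hb, Int.index_zmultiples,
      Int.natAbs_natCast]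
  exact ⟨b, Nat.pos_of_ne_zero (hind ▸ hfin), Nat.Coprime.coprime_dvd_left hbc hc,
    fun x ↦ H.mem_iff_eq_mul_of_comap_eq hp.ne_zero hc hH hcH hb, hind⟩
end

section
/- If N is a subgroup of a group A generated by finitely many conjugates of a finite subgroup C, and every element of C has only finitely many A-conjugates (C lies in the FC-centre of A), then the normal closure N of C in A is finite. -/
/-!
A finite set `s` of elements of finite order, each with finitely many conjugates, generates a
finite subgroup. The centralizer of `s` is a finite intersection of subgroups of finite index, and
its trace on `closure s` is central there, so `closure s` has centre of finite index. Its
commutators then take finitely many values, so by Schur's theorem its derived subgroup is finite,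
while its abelianization is finitely generated, abelian and generated by torsion elements, hence
finite. The normal closure of `C` is generated by the conjugates of elements of `C`, which form
such a set.
-/

open Subgroup
open scoped commutatorElement

section

variable {G : Type*} [Group G]

theorem commutatorElement_mul_mem_center (a b : G) {z w : G}
    (hz : z ∈ center G) (hw : w ∈ center G) : ⁅a * z, b * w⁆ = ⁅a, b⁆ := calc
  ⁅a * z, b * w⁆ = a * (z * (b * w)) * z⁻¹ * a⁻¹ * w⁻¹ * b⁻¹ := by group
  _ = a * b * (w * a⁻¹) * w⁻¹ * b⁻¹ := by rw [← mem_center_iff.mp hz]; group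
  _ = ⁅a, b⁆ := by rw [← mem_center_iff.mp hw]; group

theorem finite_commutatorSet_of_finiteIndex_center [(center G).FiniteIndex] :
    Finite (commutatorSet G) := by
  refine Set.Finite.to_subtype <| (Set.finite_range fun p : (G ⧸ center G) × (G ⧸ center G) =>
    ⁅p.1.out, p.2.out⁆).subset ?_
  rintro _ ⟨a, b, rfl⟩
  obtain ⟨z, hz⟩ := QuotientGroup.mk_out_eq_mul (center G) a
  obtain ⟨w, hw⟩ := QuotientGroup.mk_out_eq_mul (center G) b
  exact ⟨(a, b), by simp only [hz, hw, commutatorElement_mul_mem_center a b z.2 w.2]⟩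

theorem Abelianization.isMulTorsion_of_closure_eq_top {s : Set G} (hgen : closure s = ⊤)
    (hord : ∀ g ∈ s, IsOfFinOrder g) : IsMulTorsion (Abelianization G) := by
  have hle : closure s ≤ (CommGroup.torsion (Abelianization G)).comap Abelianization.of :=
    (closure_le _).mpr fun g hg => Abelianization.of.isOfFinOrder (hord g hg)
  rintro ⟨g⟩
  exact hle (hgen ▸ mem_top g)

theorem Group.finite_of_closure_eq_top_of_finiteIndex_center [(center G).FiniteIndex]
    {s : Set G} (hs : s.Finite) (hgen : closure s = ⊤) (hord : ∀ g ∈ s, IsOfFinOrder g) :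
    Finite G := by
  have : Finite (commutatorSet G) := finite_commutatorSet_of_finiteIndex_center
  have : Group.FG G := Group.fg_iff.mpr ⟨s, hgen, hs⟩
  have : Group.FG (Abelianization G) :=
    Group.fg_of_surjective (f := Abelianization.of) QuotientGroup.mk_surjective
  have : Finite (G ⧸ commutator G) := CommGroup.finite_of_fg_isMulTorsion (Abelianization G)
    (Abelianization.isMulTorsion_of_closure_eq_top hgen hord)
  exact Finite.of_subgroup_quotient (commutator G)

end

namespace Subgroup

variable {G : Type*} [Group G]

theorem finiteIndex_centralizer_singleton_of_finite {g : G} (h : (conjugatesOf g).Finite) :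
    (centralizer {g}).FiniteIndex := by
  have horbit : MulAction.orbit (ConjAct G) g = conjugatesOf g := by
    ext x
    exact ConjAct.mem_orbit_conjAct.trans isConj_comm
  have : Finite (MulAction.orbit (ConjAct G) g) := horbit ▸ h.to_subtype
  have : Finite (G ⧸ centralizer {g}) := .of_equiv _
    ((MulAction.orbitEquivQuotientStabilizer (ConjAct G) g).trans
      (quotientEquivOfEq (ConjAct.stabilizer_eq_centralizer g)))
  exact finiteIndex_of_finite_quotient

theorem finiteIndex_centralizer_of_finite {s : Set G} (hs : s.Finite)
    (h : ∀ g ∈ s, (conjugatesOf g).Finite) : (centralizer s).FiniteIndex := by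
  lift s to Finset G using hs
  rw [centralizer_eq_iInf]
  exact finiteIndex_iInf' _ fun g hg => finiteIndex_centralizer_singleton_of_finite (h g hg)

theorem finiteIndex_center_closure_of_finite {s : Set G} (hs : s.Finite)
    (h : ∀ g ∈ s, (conjugatesOf g).Finite) : (center (closure s)).FiniteIndex := by
  have := finiteIndex_centralizer_of_finite hs h
  refine finiteIndex_of_le (H := (centralizer s).subgroupOf (closure s)) fun z hz => ?_
  rw [mem_subgroupOf, ← centralizer_closure] at hz
  exact mem_center_iff.mpr fun y => Subtype.ext (mem_centralizer_iff.mp hz y y.2)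

theorem finite_closure_of_isOfFinOrder {s : Set G} (hs : s.Finite)
    (hord : ∀ g ∈ s, IsOfFinOrder g) (hconj : ∀ g ∈ s, (conjugatesOf g).Finite) :
    Finite (closure s) := by
  have := finiteIndex_center_closure_of_finite hs hconj
  exact Group.finite_of_closure_eq_top_of_finiteIndex_center
    (hs.preimage Subtype.val_injective.injOn) (closure_preimage_eq_top s)
    fun g hg => Submonoid.isOfFinOrder_coe.mp (hord g hg)

end Subgroup

theorem normal_closure_finite_of_FC (A : Type*) [Group A] (C : Subgroup A)
    (hC : Finite C)
    (hFC : ∀ c ∈ C, {x : A | ∃ a : A, x = a * c * a⁻¹}.Finite) :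
    ((Subgroup.normalClosure (C : Set A) : Subgroup A) : Set A).Finite := by
  have hconj : ∀ c ∈ C, (conjugatesOf c).Finite := fun c hc =>
    (hFC c hc).subset fun x hx => (isConj_iff.mp hx).imp fun _ h => h.symm
  have hgen : ∀ g ∈ Group.conjugatesOfSet (C : Set A), ∃ c ∈ C, IsConj c g :=
    fun g => Group.mem_conjugatesOfSet_iff.mp
  have : Finite (normalClosure (C : Set A)) := by
    refine finite_closure_of_isOfFinOrder ?finite ?isOfFinOrder ?finite_conjugates
    case finite => exact (Set.toFinite (C : Set A)).biUnion hconj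
    case isOfFinOrder =>
      intro g hg
      obtain ⟨c, hc, hcg⟩ := hgen g hg
      exact hcg.isOfFinOrder <|
        Submonoid.isOfFinOrder_coe.mpr (isOfFinOrder_of_finite (⟨c, hc⟩ : C))
    case finite_conjugates =>
      intro g hg
      obtain ⟨c, hc, hcg⟩ := hgen g hg
      exact hcg.conjugatesOf_eq ▸ hconj c hc
  exact Set.toFinite _
end

section
/- A group generated by finitely many elements of finite order whose centre has finite index is finite. -/
/-!
A commutator `⁅g, h⁆` only depends on the cosets of `g` and `h` modulo the centre, so a centre of
finite index leaves only finitely many commutators, and by Schur's theorem the derived subgroup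
`G'` is finite. The abelianization `G ⧸ G'` is a finitely generated abelian group generated by
torsion elements, hence finite. So `G` is finite.
-/

open scoped commutatorElement

namespace Subgroup

variable {G : Type*} [Group G]

theorem commutatorElement_mul_mem_center {g h z w : G} (hz : z ∈ center G)
    (hw : w ∈ center G) : ⁅g * z, h * w⁆ = ⁅g, h⁆ := by
  have hz_comm : ⁅z, h * w⁆ = 1 :=
    commutatorElement_eq_one_iff_mul_comm.mpr (mem_center_iff.mp hz _).symm
  have hw_comm : ⁅g, w⁆ = 1 := commutatorElement_eq_one_iff_mul_comm.mpr (mem_center_iff.mp hw g)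
  rw [commutatorElement_mul_left_eq_conj_mul, hz_comm, commutatorElement_mul_right_eq_mul_conj,
    hw_comm]
  group

instance finite_commutatorSet_of_finiteIndex_center [(center G).FiniteIndex] :
    Finite (commutatorSet G) := by
  let f : (G ⧸ center G) × (G ⧸ center G) → G := fun p ↦ ⁅p.1.out, p.2.out⁆
  refine ((Set.finite_range f).subset ?_).to_subtype
  rintro _ ⟨g, h, rfl⟩
  obtain ⟨z, hz⟩ := QuotientGroup.mk_out_eq_mul (center G) g
  obtain ⟨w, hw⟩ := QuotientGroup.mk_out_eq_mul (center G) h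
  exact ⟨(g, h), by simp only [f, hz, hw, commutatorElement_mul_mem_center z.2 w.2]⟩

end Subgroup

theorem CommGroup.finite_of_closure_eq_top {A : Type*} [CommGroup A] {S : Set A}
    (hfin : S.Finite) (htor : ∀ x ∈ S, IsOfFinOrder x) (hgen : Subgroup.closure S = ⊤) :
    Finite A :=
  have : Group.FG A := Group.fg_iff.mpr ⟨S, hgen, hfin⟩
  finite_of_fg_isMulTorsion A fun x ↦
    (mem_torsion x).mp ((Subgroup.closure_le (torsion A)).mpr htor (hgen ▸ Subgroup.mem_top x))

theorem Abelianization.finite_of_closure_eq_top {G : Type*} [Group G] {S : Set G}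
    (hfin : S.Finite) (htor : ∀ x ∈ S, IsOfFinOrder x) (hgen : Subgroup.closure S = ⊤) :
    Finite (Abelianization G) := by
  refine CommGroup.finite_of_closure_eq_top (hfin.image of) ?_ ?_
  · rintro _ ⟨x, hx, rfl⟩
    exact of.isOfFinOrder (htor x hx)
  · rw [← MonoidHom.map_closure, hgen]
    exact Subgroup.map_top_of_surjective _ QuotientGroup.mk_surjective

theorem finite_of_torsion_gen_center_finite_index (G : Type*) [Group G]
    (hZ : (Subgroup.center G).index ≠ 0)
    (S : Finset G) (htor : ∀ x ∈ S, IsOfFinOrder x)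
    (hgen : Subgroup.closure (S : Set G) = ⊤) :
    Finite G :=
  have : (Subgroup.center G).FiniteIndex := ⟨hZ⟩
  have : Finite (G ⧸ commutator G) :=
    Abelianization.finite_of_closure_eq_top S.finite_toSet htor hgen
  Finite.of_subgroup_quotient (commutator G)
end

section
/- Let A, B be groups and C a common finite subgroup, and suppose there exist normal subgroups A₁ ⊴ A, B₁ ⊴ B of finite index with C ∩ A₁ = 1 = C ∩ B₁. Then there is a finite group P and a homomorphism from the amalgam G = A *_C B onto P whose kernel N intersects every G-conjugate of C trivially. -/
open Monoid

/-- Conjugation of permutations by an equivalence, as a monoid hom. -/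
private def conjPermHom {α β : Type*} (e : α ≃ β) : Equiv.Perm α →* Equiv.Perm β where
  toFun p := (e.symm.trans p).trans e
  map_one' := by ext x; simp
  map_mul' p q := by ext x; simp

/-- Extend a permutation of `α` to `α × U`, as a monoid hom. -/
private def fstExtHom (α U : Type*) : Equiv.Perm α →* Equiv.Perm (α × U) where
  toFun σ := σ.prodCongr (Equiv.refl U)
  map_one' := by ext ⟨a, u⟩ <;> simp
  map_mul' σ τ := by ext ⟨a, u⟩ <;> simp

universe u v

private lemma exists_perm_rep {C : Type u} {G : Type v} [Group C] [Group G] (f : C →* G)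
    (hf : Function.Injective f) :
    ∃ (T : Type v) (ρ : G →* Equiv.Perm (C × T)),
      Nonempty (C × T ≃ G) ∧ ∀ (c c₀ : C) (t : T), ρ (f c) (c₀, t) = (c * c₀, t) := by
  classical
  set S := f.range with hS
  set T := Quotient (QuotientGroup.rightRel S) with hT
  have hbij : Function.Bijective (fun p : C × T => f p.1 * p.2.out) := by
    constructor
    · rintro ⟨c, t⟩ ⟨c', t'⟩ h
      simp only at h
      have h3 : f c = f c' * (Quotient.out t' * (Quotient.out t)⁻¹) := by
        rw [eq_comm, ← mul_assoc, ← h, mul_assoc, mul_inv_cancel, mul_one]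
      have htt : t = t' := by
        rw [← Quotient.out_equiv_out]
        exact QuotientGroup.rightRel_apply.mpr
          ⟨c'⁻¹ * c, by rw [map_mul, map_inv, h3]; group⟩
      subst htt
      have : f c = f c' := by
        have := mul_right_cancel h
        exact this
      exact Prod.ext (hf this) rfl
    · intro g
      have hrel := Quotient.mk_out (s := QuotientGroup.rightRel S) g
      rw [QuotientGroup.rightRel_apply] at hrel
      obtain ⟨c, hc⟩ := hrel
      refine ⟨(c, Quotient.mk _ g), ?_⟩
      simp only
      rw [hc]
      group
  let e : C × T ≃ G := Equiv.ofBijective _ hbij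
  have he : ∀ p : C × T, e p = f p.1 * p.2.out := fun _ => rfl
  refine ⟨T, (conjPermHom e.symm).comp (MulAction.toPermHom G G), ⟨e⟩, ?_⟩
  intro c c₀ t
  show e.symm (f c • (e.symm.symm (c₀, t))) = (c * c₀, t)
  rw [Equiv.symm_symm, Equiv.symm_apply_eq, he, he]
  simp [smul_eq_mul, map_mul, mul_assoc]

theorem amalgam_finite_quotient_faithful_on_conjugates_of_C
    (H : Bool → Type*) [∀ b, Group (H b)] (C : Type*) [Group C] [Finite C]
    (φ : ∀ b : Bool, C →* H b) (hφ : ∀ b, Function.Injective (φ b))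
    (A₁ : Subgroup (H true)) (B₁ : Subgroup (H false))
    [A₁.Normal] [B₁.Normal]
    (hA₁ : A₁.index ≠ 0) (hB₁ : B₁.index ≠ 0)
    (hCA : ∀ c : C, φ true c ∈ A₁ → c = 1)
    (hCB : ∀ c : C, φ false c ∈ B₁ → c = 1) :
    ∃ (P : Type) (_ : Group P) (f : PushoutI φ →* P), Finite P ∧
      Function.Surjective f ∧
      ∀ (g : PushoutI φ) (c : C), c ≠ 1 →
        f (g * PushoutI.base φ c * g⁻¹) ≠ 1 := by
  classical
  rw [Subgroup.index] at hA₁ hB₁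
  haveI : Finite (H true ⧸ A₁) := (Nat.card_ne_zero.mp hA₁).2
  haveI : Finite (H false ⧸ B₁) := (Nat.card_ne_zero.mp hB₁).2
  set fA : C →* (H true ⧸ A₁) := (QuotientGroup.mk' A₁).comp (φ true) with hfAdef
  set fB : C →* (H false ⧸ B₁) := (QuotientGroup.mk' B₁).comp (φ false) with hfBdef
  have hfA : Function.Injective fA := by
    rw [injective_iff_map_eq_one]
    intro c hc
    exact hCA c (by rwa [hfAdef, MonoidHom.comp_apply, QuotientGroup.mk'_apply,
      QuotientGroup.eq_one_iff] at hc)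
  have hfB : Function.Injective fB := by
    rw [injective_iff_map_eq_one]
    intro c hc
    exact hCB c (by rwa [hfBdef, MonoidHom.comp_apply, QuotientGroup.mk'_apply,
      QuotientGroup.eq_one_iff] at hc)
  obtain ⟨TA, ρA, ⟨eA⟩, hA⟩ := exists_perm_rep fA hfA
  obtain ⟨TB, ρB, ⟨eB⟩, hB⟩ := exists_perm_rep fB hfB
  haveI : Finite (C × TA) := Finite.of_equiv _ eA.symm
  haveI : Finite (C × TB) := Finite.of_equiv _ eB.symm
  haveI : Finite TA := Finite.of_injective (fun t => ((1 : C), t))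
    (fun a b h => by simpa using h)
  haveI : Finite TB := Finite.of_injective (fun t => ((1 : C), t))
    (fun a b h => by simpa using h)
  obtain ⟨t0A⟩ : Nonempty TA := ⟨(eA.symm 1).2⟩
  obtain ⟨t0B⟩ : Nonempty TB := ⟨(eB.symm 1).2⟩
  set X := (C × TA) × TB with hX
  let e₀ : (C × TB) × TA ≃ (C × TA) × TB :=
    ⟨fun p => ((p.1.1, p.2), p.1.2), fun p => ((p.1.1, p.2), p.1.2),
      fun p => rfl, fun p => rfl⟩
  let ψA : H true →* Equiv.Perm X :=
    (fstExtHom (C × TA) TB).comp (ρA.comp (QuotientGroup.mk' A₁))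
  let ψB : H false →* Equiv.Perm X :=
    (conjPermHom e₀).comp ((fstExtHom (C × TB) TA).comp (ρB.comp (QuotientGroup.mk' B₁)))
  let ψ : ∀ b : Bool, H b →* Equiv.Perm X := fun b =>
    match b with
    | true => ψA
    | false => ψB
  have hψA : ∀ (c c₀ : C) (ta : TA) (tb : TB),
      ψA (φ true c) ((c₀, ta), tb) = ((c * c₀, ta), tb) := by
    intro c c₀ ta tb
    show ((ρA (fA c)).prodCongr (Equiv.refl TB)) ((c₀, ta), tb) = _
    simp [hA]
  have hψB : ∀ (c c₀ : C) (ta : TA) (tb : TB),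
      ψB (φ false c) ((c₀, ta), tb) = ((c * c₀, ta), tb) := by
    intro c c₀ ta tb
    show e₀ (((ρB (fB c)).prodCongr (Equiv.refl TA)) (e₀.symm ((c₀, ta), tb))) = _
    simp [e₀, hB]
  have hcompat : ∀ b, (ψ b).comp (φ b) = ψA.comp (φ true) := by
    intro b
    cases b
    · ext c : 1
      dsimp [ψ]
      refine Equiv.ext fun x => ?_
      obtain ⟨⟨c₀, ta⟩, tb⟩ := x
      rw [hψB, hψA]
    · rfl
  let f0 : PushoutI φ →* Equiv.Perm X := PushoutI.lift ψ (ψA.comp (φ true)) hcompat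
  have key : ∀ c : C, c ≠ 1 → f0 (PushoutI.base φ c) ≠ 1 := by
    intro c hc h1
    apply hc
    have := congrArg (fun σ : Equiv.Perm X => σ (((1 : C), t0A), t0B)) h1
    simp only [f0, PushoutI.lift_base, MonoidHom.comp_apply, Equiv.Perm.one_apply] at this
    rw [hψA] at this
    simpa using congrArg (fun p : X => p.1.1) this
  -- pass to the range, then transport to `Type 0`
  haveI : Finite X := by infer_instance
  haveI : Finite (Equiv.Perm X) := by infer_instance
  let R := f0.range
  haveI : Finite R := by infer_instance
  let f1 : PushoutI φ →* R := f0.rangeRestrict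
  have hf1surj : Function.Surjective f1 := f0.rangeRestrict_surjective
  haveI : Small.{0} R := small_of_injective (Finite.equivFin R).injective
  haveI : Finite (Shrink.{0} R) := Finite.of_equiv _ (equivShrink R)
  let μ : R ≃* Shrink.{0} R := (Shrink.mulEquiv).symm
  refine ⟨Shrink.{0} R, inferInstance, μ.toMonoidHom.comp f1, inferInstance,
    μ.surjective.comp hf1surj, ?_⟩
  intro g c hc h1
  apply key c hc
  rw [MonoidHom.comp_apply, MulEquiv.coe_toMonoidHom, EmbeddingLike.map_eq_one_iff] at h1
  have h2 : f0 (g * PushoutI.base φ c * g⁻¹) = 1 := Subtype.ext_iff.mp h1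
  rw [map_mul, map_mul, map_inv] at h2
  have := congrArg (fun x => (f0 g)⁻¹ * x * f0 g) h2
  simpa [mul_assoc] using this
end

section
/- An amalgamated free product of two finite groups over a common subgroup is residually finite. -/
/-!
Fix a transversal `Tᵢ` of `H` in each `Gᵢ` and write `g = h · t₁ ⋯ tₙ` in normal form, with
`tₖ ∈ T_{iₖ} \ {1}` and consecutive indices distinct. Let `S` be the set of suffixes of
`t₁ ⋯ tₙ`, `O = (∏ⱼ Tⱼ) × S` and `Qᵢ = (∏_{j ≠ i} Tⱼ) × S`. For each `i`, a bijection
`O ≃ Tᵢ × Qᵢ` identifies `H × O` with `Gᵢ × Qᵢ` through `(h, t, q) ↦ (φᵢ h · t, q)`, and `Gᵢ`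
acts there by left multiplication. All of these actions restrict to left multiplication of `H` on
the first factor, so they assemble into an action of the pushout on the finite set `H × O`.
Choose the bijection for `i` so that `(1, s)` goes to `(1, 1, s)` and `(1, t :: s)` goes to
`(t, 1, s)` whenever `t ∈ Tᵢ`; this is consistent because indices alternate and `t ≠ 1`. Then `t`
carries `(1, 1, s)` to `(1, 1, t :: s)`, so `g` carries `(1, 1, [])` to `(h, 1, t₁ ⋯ tₙ)`, a
different point unless `n = 0` and `h = 1`.
-/

open Function

theorem exists_equiv_comp_eq_of_injective {α β P : Type*} [Finite α] {ι : P → α} {f : P → β}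
    (hι : Injective ι) (hf : Injective f) (h : Nonempty (α ≃ β)) :
    ∃ e : α ≃ β, ∀ p, e (ι p) = f p := by
  let F : Set.range ι ↪ β := ⟨f ∘ (Equiv.ofInjective ι hι).symm, hf.comp (Equiv.injective _)⟩
  obtain ⟨e, he⟩ := Cardinal.extend_function_finite F h
  exact ⟨e, fun p => by simpa [F] using he ⟨ι p, p, rfl⟩⟩

theorem List.prod_map_apply_of_cons_suffix {α X : Type*} {ℓ : List α} {π : α → Equiv.Perm X}
    {p : {s // s <:+ ℓ} → X}
    (h : ∀ a s (has : a :: s <:+ ℓ), π a (p ⟨s, (suffix_cons a s).trans has⟩) = p ⟨a :: s, has⟩) :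
    (ℓ.map π).prod (p ⟨[], nil_suffix⟩) = p ⟨ℓ, suffix_refl ℓ⟩ := by
  suffices ∀ s (hs : s <:+ ℓ), (s.map π).prod (p ⟨[], nil_suffix⟩) = p ⟨s, hs⟩ from
    this ℓ (suffix_refl ℓ)
  intro s hs
  induction s with
  | nil => rfl
  | cons a s ih =>
    rw [map_cons, prod_cons, Equiv.Perm.mul_apply, ih ((suffix_cons a s).trans hs), h a s hs]

def Equiv.Perm.mulLeftFst (G Q : Type*) [Group G] : G →* Perm (G × Q) where
  toFun g := (Equiv.mulLeft g).prodCongr (Equiv.refl Q)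
  map_one' := by ext <;> simp
  map_mul' g h := by ext <;> simp [mul_assoc]

@[simp]
theorem Equiv.Perm.mulLeftFst_apply {G Q : Type*} [Group G] (g : G) (x : G × Q) :
    mulLeftFst G Q g x = (g * x.1, x.2) := rfl

namespace Subgroup.IsComplement

variable {C K O Q : Type*} [Group C] [Group K] {ψ : C →* K} {T : Set K}
  (hψ : Injective ψ) (hT : IsComplement (ψ.range : Set K) T)

noncomputable def prodEquiv : C × T ≃ K :=
  ((MonoidHom.ofInjective hψ).toEquiv.prodCongr (Equiv.refl T)).trans hT.equiv.symm

@[simp]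
theorem prodEquiv_apply (x : C × T) : prodEquiv hψ hT x = ψ x.1 * x.2 := rfl

noncomputable def coordEquiv (e : O ≃ T × Q) : C × O ≃ K × Q :=
  ((Equiv.refl C).prodCongr e).trans
    ((Equiv.prodAssoc C T Q).symm.trans ((prodEquiv hψ hT).prodCongr (Equiv.refl Q)))

@[simp]
theorem coordEquiv_apply (e : O ≃ T × Q) (x : C × O) :
    coordEquiv hψ hT e x = (ψ x.1 * (e x.2).1, (e x.2).2) := by
  simp [coordEquiv]

noncomputable def coordRep (e : O ≃ T × Q) : K →* Equiv.Perm (C × O) :=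
  (coordEquiv hψ hT e).symm.permCongrHom.toMonoidHom.comp (Equiv.Perm.mulLeftFst K Q)

theorem coordRep_apply (e : O ≃ T × Q) (k : K) (x : C × O) :
    coordRep hψ hT e k x =
      (coordEquiv hψ hT e).symm (k * (coordEquiv hψ hT e x).1, (coordEquiv hψ hT e x).2) := by
  simp [coordRep, Equiv.permCongrHom_coe, Equiv.permCongr_apply]

theorem coordRep_comp (e : O ≃ T × Q) :
    (coordRep hψ hT e).comp ψ = Equiv.Perm.mulLeftFst C O := by
  ext c x : 2
  rw [MonoidHom.comp_apply, coordRep_apply, Equiv.symm_apply_eq]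
  simp [mul_assoc]

theorem coordRep_apply_one_of_eq {e : O ≃ T × Q} {k : K} {o o' : O} {t t' : T} {q : Q}
    (ho : e o = (t, q)) (ho' : e o' = (t', q)) (hk : k * t = t') :
    coordRep hψ hT e k (1, o) = (1, o') := by
  rw [coordRep_apply, Equiv.symm_apply_eq]
  simp [ho, ho', hk]

end Subgroup.IsComplement

namespace Monoid.PushoutI

variable {ι : Type*} {G : ι → Type*} [∀ i, Group (G i)] {H : Type*} [Group H]
  {φ : ∀ i, H →* G i}

namespace NormalWord

def Transversal.ones (d : Transversal φ) (i : ι) : d.set i := ⟨1, d.one_mem i⟩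

variable {d : Transversal φ} (w : NormalWord d)

theorem not_cons_suffix_of_cons_suffix {i : ι} {g g' : G i} {s s' : List (Σ i, G i)}
    (h : ⟨i, g⟩ :: s <:+ w.toList) : s ≠ ⟨i, g'⟩ :: s' := by
  rintro rfl
  exact (List.isChain_cons_cons.1 (w.chain_ne.suffix h)).1 rfl

abbrev Suffix : Type _ := {s // s <:+ w.toList}

instance : Finite w.Suffix :=
  have : Finite {x // x ∈ w.toList.tails} := (List.finite_toSet _).to_subtype
  Finite.of_injective (fun s => (⟨s.1, (List.mem_tails _ _).2 s.2⟩ : {x // x ∈ w.toList.tails}))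
    fun _ _ h => Subtype.ext (by simpa using congrArg Subtype.val h)

abbrev Position : Type _ := (∀ j, d.set j) × w.Suffix

abbrev Coord (i : ι) : Type _ := d.set i × ((∀ j : {j // j ≠ i}, d.set j) × w.Suffix)

variable [DecidableEq ι]

/-- The prescribed `Tᵢ × Qᵢ`-coordinates of `(1, s) : Position`. The padding
`∀ j : {j // j ≠ i}, d.set j` in `Coord i` only makes it equinumerous with `Position`. -/
noncomputable def suffixCoord (i : ι) : w.Suffix → w.Coord i
  | ⟨⟨j, g⟩ :: s, h⟩ =>
    if hj : j = i then (((d.compl i).equiv (hj ▸ g)).2, fun k : {j // j ≠ i} => d.ones k,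
      ⟨s, (List.suffix_cons _ _).trans h⟩)
    else (d.ones i, fun k : {j // j ≠ i} => d.ones k, ⟨_, h⟩)
  | ⟨[], h⟩ => (d.ones i, fun k : {j // j ≠ i} => d.ones k, ⟨[], h⟩)

theorem suffixCoord_cons {i : ι} {g : G i} {s : List (Σ i, G i)}
    (h : ⟨i, g⟩ :: s <:+ w.toList) :
    w.suffixCoord i ⟨_, h⟩ = (⟨g, w.normalized i g (h.subset List.mem_cons_self)⟩,
      fun k : {j // j ≠ i} => d.ones k, ⟨s, (List.suffix_cons _ _).trans h⟩) := by
  simp only [suffixCoord, dif_pos, Prod.mk.injEq, and_true]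
  exact Subgroup.IsComplement.equiv_snd_eq_self_of_mem_of_one_mem _ (one_mem _) _

theorem suffixCoord_of_forall_ne {i : ι} {s : w.Suffix} (hs : ∀ g s', s.1 ≠ ⟨i, g⟩ :: s') :
    w.suffixCoord i s = (d.ones i, fun k : {j // j ≠ i} => d.ones k, s) := by
  rcases s with ⟨_ | ⟨⟨j, g⟩, s⟩, h⟩
  · rfl
  · have hj : j ≠ i := by
      rintro rfl
      exact hs g s rfl
    simp [suffixCoord, hj]

theorem suffixCoord_eq_or (i : ι) (s : w.Suffix) :
    (w.suffixCoord i s).1 = d.ones i ∧ (w.suffixCoord i s).2.2 = s ∨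
      ((w.suffixCoord i s).1 : G i) ≠ 1 ∧
        s.1 = ⟨i, (w.suffixCoord i s).1⟩ :: (w.suffixCoord i s).2.2.1 := by
  rcases s with ⟨_ | ⟨⟨j, g⟩, s⟩, h⟩
  · exact .inl ⟨rfl, rfl⟩
  · by_cases hj : j = i
    · subst hj
      simp [suffixCoord_cons, w.ne_one _ (h.subset List.mem_cons_self)]
    · simp [suffixCoord, hj]

theorem suffixCoord_injective (i : ι) : Injective (w.suffixCoord i) := by
  intro s s' h
  rcases w.suffixCoord_eq_or i s with ⟨h1, h2⟩ | ⟨h1, h2⟩ <;>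
    rcases w.suffixCoord_eq_or i s' with ⟨h1', h2'⟩ | ⟨h1', h2'⟩
  · rw [← h2, h, h2']
  · rw [← h, h1] at h1'
    exact absurd rfl h1'
  · rw [h, h1'] at h1
    exact absurd rfl h1
  · exact Subtype.ext (by rw [h2, h2', h])

theorem exists_equiv_suffixCoord [Finite ι] [∀ i, Finite (G i)] (i : ι) :
    ∃ e : w.Position ≃ w.Coord i, ∀ s, e (d.ones, s) = w.suffixCoord i s :=
  exists_equiv_comp_eq_of_injective (fun _ _ h => congrArg Prod.snd h)
    (w.suffixCoord_injective i)
    ⟨((Equiv.piSplitAt i _).prodCongr (Equiv.refl _)).trans (Equiv.prodAssoc _ _ _)⟩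

section SuffixRep

variable {w} (e : ∀ i, w.Position ≃ w.Coord i)

noncomputable def suffixRep : PushoutI φ →* Equiv.Perm (H × w.Position) :=
  lift (fun i => Subgroup.IsComplement.coordRep (d.injective i) (d.compl i) (e i))
    (Equiv.Perm.mulLeftFst _ _) fun _ => Subgroup.IsComplement.coordRep_comp _ _ _

variable {e}

theorem suffixRep_of_apply (he : ∀ i s, e i (d.ones, s) = w.suffixCoord i s) {i : ι} {g : G i}
    {s : List (Σ i, G i)} (h : ⟨i, g⟩ :: s <:+ w.toList) :
    suffixRep e (of i g) (1, d.ones, ⟨s, (List.suffix_cons _ _).trans h⟩) =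
      (1, d.ones, ⟨_, h⟩) := by
  rw [suffixRep, lift_of]
  refine Subgroup.IsComplement.coordRep_apply_one_of_eq _ _
    ((he i _).trans (w.suffixCoord_of_forall_ne fun _ _ => w.not_cons_suffix_of_cons_suffix h))
    ((he i _).trans (w.suffixCoord_cons h)) (mul_one g)

theorem suffixRep_prod_apply (he : ∀ i s, e i (d.ones, s) = w.suffixCoord i s) :
    suffixRep e w.prod (1, d.ones, ⟨[], List.nil_suffix⟩) =
      (w.head, d.ones, ⟨w.toList, List.suffix_refl _⟩) := by
  have hword : suffixRep e (ofCoprodI w.toWord.prod) =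
      (w.toList.map fun x => suffixRep e (of x.1 x.2)).prod := by
    rw [CoprodI.Word.prod, map_list_prod, map_list_prod, List.map_map, List.map_map]
    rfl
  rw [prod, map_mul, Equiv.Perm.mul_apply, hword,
    List.prod_map_apply_of_cons_suffix (p := fun s => (1, d.ones, s))
      fun ⟨_, _⟩ _ h => suffixRep_of_apply he h,
    suffixRep, lift_base, Equiv.Perm.mulLeftFst_apply, mul_one]

end SuffixRep

theorem exists_hom_perm_fin_ne_one [Finite ι] [∀ i, Finite (G i)] [Finite H] (hw : w.prod ≠ 1) :
    ∃ (n : ℕ) (ρ : PushoutI φ →* Equiv.Perm (Fin n)), ρ w.prod ≠ 1 := by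
  choose e he using w.exists_equiv_suffixCoord
  have hmove : suffixRep e w.prod ≠ 1 := by
    intro h1
    have h := suffixRep_prod_apply he
    rw [h1, Equiv.Perm.one_apply, Prod.mk.injEq, Prod.mk.injEq, Subtype.mk.injEq] at h
    obtain ⟨hhead, -, hlist⟩ := h
    apply hw
    rw [prod, CoprodI.Word.prod, ← hlist, ← hhead]
    simp
  obtain ⟨n, ⟨eX⟩⟩ := Finite.exists_equiv_fin (H × w.Position)
  exact ⟨n, eX.permCongrHom.toMonoidHom.comp (suffixRep e),
    eX.permCongrHom.map_ne_one_iff.2 hmove⟩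

end NormalWord

theorem exists_hom_perm_fin_ne_one [Finite ι] [∀ i, Finite (G i)] [Finite H]
    (hφ : ∀ i, Injective (φ i)) {g : PushoutI φ} (hg : g ≠ 1) :
    ∃ (n : ℕ) (ρ : PushoutI φ →* Equiv.Perm (Fin n)), ρ g ≠ 1 := by
  classical
  obtain ⟨d⟩ := NormalWord.transversal_nonempty φ hφ
  have hprod : (NormalWord.equiv (d := d) g).prod = g := NormalWord.equiv.symm_apply_apply g
  rw [← hprod] at hg ⊢
  exact NormalWord.exists_hom_perm_fin_ne_one _ hg

end Monoid.PushoutI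

open Monoid

/-- An amalgamated free product of two finite groups over a common subgroup is
residually finite. -/
theorem amalgam_of_finite_groups_residually_finite
    (H : Bool → Type*) [∀ b, Group (H b)] [∀ b, Finite (H b)]
    (C : Type*) [Group C]
    (φ : ∀ b : Bool, C →* H b) (hφ : ∀ b, Function.Injective (φ b)) :
    ∀ g : PushoutI φ, g ≠ 1 →
      ∃ (P : Type) (_ : Group P) (f : PushoutI φ →* P), Finite P ∧ f g ≠ 1 := by
  intro g hg
  have : Finite C := Finite.of_injective _ (hφ true)
  obtain ⟨n, ρ, hρ⟩ := PushoutI.exists_hom_perm_fin_ne_one hφ hg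
  exact ⟨Equiv.Perm (Fin n), inferInstance, ρ, inferInstance, hρ⟩
end

section
/- The class of finite groups admits amalgamations over subgroups: given finite groups A, B and a finite group C with injective homomorphisms φ_A : C → A and φ_B : C → B, there exist a finite group H and injective homomorphisms ψ_A : A → H, ψ_B : B → H with ψ_A ∘ φ_A = ψ_B ∘ φ_B. -/
section Amalgam

variable {C : Type*} [Group C]

/-- Decompose a group element as (C-part, coset), given an injective hom `φ : C →* A`. -/
noncomputable def amalgamDec {A : Type*} [Group A] (φ : C →* A)
    (hφ : Function.Injective φ) : A ≃ C × (A ⧸ φ.range) where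
  toFun g := ((MonoidHom.ofInjective hφ).symm
      ⟨(Quotient.out (QuotientGroup.mk g : A ⧸ φ.range))⁻¹ * g, by
        rw [← QuotientGroup.eq, QuotientGroup.out_eq']⟩,
    QuotientGroup.mk g)
  invFun p := Quotient.out p.2 * φ p.1
  left_inv g := by
    simp [MonoidHom.apply_ofInjective_symm]
  right_inv p := by
    obtain ⟨c, q⟩ := p
    have hq : (QuotientGroup.mk (Quotient.out q * φ c) : A ⧸ φ.range) = q := by
      rw [QuotientGroup.mk_mul_of_mem _ (MonoidHom.mem_range.mpr ⟨c, rfl⟩), QuotientGroup.out_eq']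
    refine Prod.ext ?_ hq
    have : ((MonoidHom.ofInjective hφ) c : A) = φ c := MonoidHom.ofInjective_apply hφ
    apply (MonoidHom.ofInjective hφ).injective
    simp only [MulEquiv.apply_symm_apply]
    ext
    simp [this, hq, mul_assoc]

lemma amalgamDec_mul {A : Type*} [Group A] (φ : C →* A)
    (hφ : Function.Injective φ) (g : A) (c₀ : C) :
    amalgamDec φ hφ (g * φ c₀) =
      ((amalgamDec φ hφ g).1 * c₀, (amalgamDec φ hφ g).2) := by
  have hq : (QuotientGroup.mk (g * φ c₀) : A ⧸ φ.range) = QuotientGroup.mk g :=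
    QuotientGroup.mk_mul_of_mem _ (MonoidHom.mem_range.mpr ⟨c₀, rfl⟩)
  refine Prod.ext ?_ hq
  apply (MonoidHom.ofInjective hφ).injective
  simp only [amalgamDec, Equiv.coe_fn_mk, MulEquiv.apply_symm_apply, map_mul]
  ext
  have h1 : ((MonoidHom.ofInjective hφ) c₀ : A) = φ c₀ := MonoidHom.ofInjective_apply hφ
  simp [hq, h1, mul_assoc]

/-- The embedding of `A` into the permutations of `C × (A ⧸ φ.range) × Y`. -/
noncomputable def amalgamPsi {A : Type*} [Group A] (φ : C →* A)
    (hφ : Function.Injective φ) (Y : Type*) :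
    A →* Equiv.Perm (C × (A ⧸ φ.range) × Y) :=
  MonoidHom.mk'
    (fun a =>
      (((amalgamDec φ hφ).prodCongr (Equiv.refl Y)).trans
        (Equiv.prodAssoc C (A ⧸ φ.range) Y)).symm.trans
      ((((Equiv.mulRight a⁻¹).prodCongr (Equiv.refl Y)).trans
        (((amalgamDec φ hφ).prodCongr (Equiv.refl Y)).trans
          (Equiv.prodAssoc C (A ⧸ φ.range) Y)))))
    (by
      intro a b
      ext x <;> simp [mul_assoc])

lemma amalgamPsi_apply {A : Type*} [Group A] (φ : C →* A)
    (hφ : Function.Injective φ) (Y : Type*) (a : A) (c : C)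
    (q : A ⧸ φ.range) (y : Y) :
    amalgamPsi φ hφ Y a (c, q, y) =
      ((amalgamDec φ hφ (((amalgamDec φ hφ).symm (c, q)) * a⁻¹)).1,
       (amalgamDec φ hφ (((amalgamDec φ hφ).symm (c, q)) * a⁻¹)).2, y) := by
  simp [amalgamPsi, Equiv.prodAssoc]

lemma amalgamPsi_injective {A : Type*} [Group A] (φ : C →* A)
    (hφ : Function.Injective φ) (Y : Type*) [Nonempty Y] :
    Function.Injective (amalgamPsi φ hφ Y) := by
  rw [injective_iff_map_eq_one]
  intro a ha
  obtain ⟨y⟩ := ‹Nonempty Y›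
  set p := amalgamDec φ hφ (1 : A) with hp
  have h1 := congrArg (fun σ : Equiv.Perm _ => σ (p.1, p.2, y)) ha
  simp only [Equiv.Perm.coe_one, id_eq, amalgamPsi_apply] at h1
  have hs : (amalgamDec φ hφ).symm (p.1, p.2) = 1 := by
    rw [hp]
    simp
  rw [hs, one_mul] at h1
  have h2 : amalgamDec φ hφ a⁻¹ = p := by
    have hc := congrArg Prod.fst h1
    have hq := congrArg (fun t : C × (A ⧸ φ.range) × Y => t.2.1) h1
    exact Prod.ext hc hq
  rw [hp] at h2
  have := (amalgamDec φ hφ).injective h2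
  rwa [inv_eq_one] at this

lemma amalgamPsi_comp {A : Type*} [Group A] (φ : C →* A)
    (hφ : Function.Injective φ) (Y : Type*) (c₀ : C) (c : C)
    (q : A ⧸ φ.range) (y : Y) :
    amalgamPsi φ hφ Y (φ c₀) (c, q, y) = (c * c₀⁻¹, q, y) := by
  rw [amalgamPsi_apply]
  have : ((amalgamDec φ hφ).symm (c, q)) * (φ c₀)⁻¹
      = ((amalgamDec φ hφ).symm (c, q)) * φ c₀⁻¹ := by simp
  rw [this, amalgamDec_mul]
  simp

end Amalgam

/-- The class of finite groups admits amalgamations over subgroups. -/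
theorem finite_groups_admit_amalgamation
    (A B C : Type*) [Group A] [Group B] [Group C] [Finite A] [Finite B] [Finite C]
    (φA : C →* A) (φB : C →* B)
    (hA : Function.Injective φA) (hB : Function.Injective φB) :
    ∃ (H : Type) (_ : Group H), Finite H ∧
      ∃ (ψA : A →* H) (ψB : B →* H),
        Function.Injective ψA ∧ Function.Injective ψB ∧
        ψA.comp φA = ψB.comp φB := by
  classical
  set QA := A ⧸ φA.range
  set QB := B ⧸ φB.range
  set T := C × QA × QB with hT
  letI : Finite T := by infer_instance
  set e : C × QB × QA ≃ T :=
    (Equiv.refl C).prodCongr (Equiv.prodComm QB QA) with he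
  set ψA' : A →* Equiv.Perm T := amalgamPsi φA hA QB with hψA'
  set conjHom : Equiv.Perm (C × QB × QA) →* Equiv.Perm T :=
    MonoidHom.mk' (fun σ => (e.symm.trans σ).trans e) (by
      intro σ τ; ext x <;> simp) with hconj
  have conjInj : Function.Injective conjHom := by
    rw [injective_iff_map_eq_one]
    intro σ hσ
    apply Equiv.ext
    intro x
    have h := congrArg (fun p : Equiv.Perm T => p (e x)) hσ
    simp only [hconj, MonoidHom.mk'_apply, Equiv.trans_apply,
      Equiv.symm_apply_apply, Equiv.Perm.coe_one, id_eq] at h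
    exact e.injective h
  set ψB' : B →* Equiv.Perm T := conjHom.comp (amalgamPsi φB hB QA) with hψB'
  obtain ⟨H, hGroup, hFintype, ⟨iso⟩⟩ :=
    Finite.exists_type_univ_nonempty_mulEquiv.{_, 0} (Equiv.Perm T)
  refine ⟨H, hGroup, Finite.of_fintype H,
    iso.toMonoidHom.comp ψA', iso.toMonoidHom.comp ψB',
    iso.injective.comp (amalgamPsi_injective φA hA QB),
    iso.injective.comp (conjInj.comp (amalgamPsi_injective φB hB QA)), ?_⟩
  ext c₀
  simp only [MonoidHom.comp_apply, MulEquiv.coe_toMonoidHom]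
  have key : ψA' (φA c₀) = ψB' (φB c₀) := by
    apply Equiv.ext
    rintro ⟨c, qa, qb⟩
    have hL : ψA' (φA c₀) (c, qa, qb) = (c * c₀⁻¹, qa, qb) :=
      amalgamPsi_comp φA hA QB c₀ c qa qb
    have hR : ψB' (φB c₀) (c, qa, qb) = (c * c₀⁻¹, qa, qb) := by
      show (e.symm.trans (amalgamPsi φB hB QA (φB c₀))).trans e (c, qa, qb)
          = (c * c₀⁻¹, qa, qb)
      have hsymm : e.symm (c, qa, qb) = (c, qb, qa) := rfl
      simp only [Equiv.trans_apply, hsymm,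
        amalgamPsi_comp φB hB QA c₀ c qb qa]
      rfl
    rw [hL, hR]
  rw [key]
end
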